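/- Let S be a 0-simplifying Tarski monoid, let F ⊆ E(S) be an ultrafilter of the Boolean algebra E(S), and let e ∈ F. Then there exists an element a ∈ S such that a² = 0 and a ≠ 0 (a is an infinitesimal), a⁻¹a ∈ F, and a ∈ eSe. -/

import Mathlib

universe u

/-- An inverse monoid with zero: every element `a` has a unique generalized
inverse `a⁻¹`, and `0` is an absorbing element. -/
class InverseMonoidWithZero (S : Type u) extends Monoid S, Zero S, Inv S where
  zero_mul' : ∀ a : S, 0 * a = 0
  mul_zero' : ∀ a : S, a * 0 = 0
  mul_inv_mul : ∀ a : S, a * a⁻¹ * a = a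
  inv_mul_inv : ∀ a : S, a⁻¹ * a * a⁻¹ = a⁻¹
  inv_unique : ∀ a b : S, a * b * a = a → b * a * b = b → b = a⁻¹

section BasicDefs

variable {S : Type u}

/-- The natural partial order: `a ≤ b` iff `a = e * b` for some idempotent `e`. -/
def nle [InverseMonoidWithZero S] (a b : S) : Prop :=
  ∃ e : S, e * e = e ∧ a = e * b

/-- `a` and `b` are compatible if `a * b⁻¹` and `a⁻¹ * b` are idempotents. -/
def Compat [InverseMonoidWithZero S] (a b : S) : Prop :=
  (a * b⁻¹) * (a * b⁻¹) = a * b⁻¹ ∧ (a⁻¹ * b) * (a⁻¹ * b) = a⁻¹ * b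

/-- `a` and `b` are orthogonal if `a * b⁻¹ = 0` and `a⁻¹ * b = 0`. -/
def Orth [InverseMonoidWithZero S] (a b : S) : Prop :=
  a * b⁻¹ = 0 ∧ a⁻¹ * b = 0

end BasicDefs

/-- A distributive inverse monoid: every compatible pair has a join (for the
natural partial order), recorded by `sup`, and multiplication distributes over
these binary joins. -/
class DistributiveInverseMonoid (S : Type u) extends InverseMonoidWithZero S where
  sup : S → S → S
  le_sup_left : ∀ a b : S, Compat a b → nle a (sup a b)
  le_sup_right : ∀ a b : S, Compat a b → nle b (sup a b)
  sup_le : ∀ a b c : S, Compat a b → nle a c → nle b c → nle (sup a b) c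
  mul_sup : ∀ a b c : S, Compat a b → c * sup a b = sup (c * a) (c * b)
  sup_mul : ∀ a b c : S, Compat a b → sup a b * c = sup (a * c) (b * c)

/-- A Boolean inverse monoid: a distributive inverse monoid whose idempotents
form a Boolean algebra under the natural partial order; `compl` records the
complementation on idempotents. -/
class BooleanInverseMonoid (S : Type u) extends DistributiveInverseMonoid S where
  compl : S → S
  compl_idem : ∀ e : S, e * e = e → compl e * compl e = compl e
  mul_compl : ∀ e : S, e * e = e → e * compl e = 0
  sup_compl : ∀ e : S, e * e = e → sup e (compl e) = 1

/-- A Boolean inverse ∧-monoid: a Boolean inverse monoid in which every pair of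
elements has a meet with respect to the natural partial order. -/
class BooleanInverseMeetMonoid (S : Type u) extends BooleanInverseMonoid S where
  inf : S → S → S
  inf_le_left : ∀ a b : S, nle (inf a b) a
  inf_le_right : ∀ a b : S, nle (inf a b) b
  le_inf : ∀ a b c : S, nle c a → nle c b → nle c (inf a b)

section MoreDefs

variable {S : Type u}

/-- The join of a compatible pair. -/
def bsup [DistributiveInverseMonoid S] (a b : S) : S := DistributiveInverseMonoid.sup a b

/-- Complementation in the Boolean algebra of idempotents. -/
def bcompl [BooleanInverseMonoid S] (e : S) : S := BooleanInverseMonoid.compl e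

/-- The binary meet. -/
def binf [BooleanInverseMeetMonoid S] (a b : S) : S := BooleanInverseMeetMonoid.inf a b

/-- The fixed-point operator `φ(s) = s ∧ 1`. -/
def phi [BooleanInverseMeetMonoid S] (s : S) : S := binf s 1

/-- The support operator `σ(s) = \overline{φ(s)} ⋅ s⁻¹ s`. -/
def sigma [BooleanInverseMeetMonoid S] (s : S) : S := bcompl (phi s) * (s⁻¹ * s)

/-- An infinitesimal is a non-zero element that squares to zero. -/
def Infinitesimal [InverseMonoidWithZero S] (a : S) : Prop := a ≠ 0 ∧ a * a = 0

/-- A (two-sided) ideal. -/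
def IsMIdeal [InverseMonoidWithZero S] (I : Set S) : Prop :=
  I.Nonempty ∧ ∀ a ∈ I, ∀ s : S, s * a ∈ I ∧ a * s ∈ I

/-- A ∨-ideal: an ideal closed under joins of compatible pairs. -/
def IsVIdeal [DistributiveInverseMonoid S] (I : Set S) : Prop :=
  IsMIdeal I ∧ ∀ a ∈ I, ∀ b ∈ I, Compat a b → bsup a b ∈ I

end MoreDefs

/-- 0-simplifying: the only ∨-ideals are `{0}` and `S`. -/
def ZeroSimplifying (S : Type u) [DistributiveInverseMonoid S] : Prop :=
  ∀ I : Set S, IsVIdeal I → I = {0} ∨ I = Set.univ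

/-- 0-simple: non-trivial and the only ideals are `{0}` and `S`. -/
def ZeroSimple (S : Type u) [InverseMonoidWithZero S] : Prop :=
  (∃ s : S, s ≠ 0) ∧ ∀ I : Set S, IsMIdeal I → I = {0} ∨ I = Set.univ

/-- Fundamental: every element commuting with all idempotents is an idempotent. -/
def Fundamental (S : Type u) [InverseMonoidWithZero S] : Prop :=
  ∀ a : S, (∀ e : S, e * e = e → a * e = e * a) → a * a = a

/-- The Boolean algebra of idempotents is atomless. -/
def IdemAtomless (S : Type u) [InverseMonoidWithZero S] : Prop :=
  ∀ e : S, e * e = e → e ≠ 0 → ∃ f : S, f * f = f ∧ f ≠ 0 ∧ nle f e ∧ f ≠ e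

section Filters

variable {S : Type u}

/-- A filter in a Boolean inverse ∧-monoid: a nonempty subset closed under
binary meets and upward closed in the natural partial order. -/
def IsMFilter [BooleanInverseMeetMonoid S] (A : Set S) : Prop :=
  A.Nonempty ∧ (∀ a ∈ A, ∀ b ∈ A, binf a b ∈ A) ∧ ∀ a ∈ A, ∀ b : S, nle a b → b ∈ A

/-- An ultrafilter: a maximal proper filter. -/
def IsMUltrafilter [BooleanInverseMeetMonoid S] (A : Set S) : Prop :=
  IsMFilter A ∧ (0 : S) ∉ A ∧ ∀ B : Set S, IsMFilter B → (0 : S) ∉ B → A ⊆ B → A = B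

/-- A filter of the Boolean algebra of idempotents (meet of idempotents is
their product). -/
def IsIdemFilter [InverseMonoidWithZero S] (F : Set S) : Prop :=
  F.Nonempty ∧ (∀ e ∈ F, e * e = e) ∧ (∀ e ∈ F, ∀ f ∈ F, e * f ∈ F) ∧
    ∀ e ∈ F, ∀ f : S, f * f = f → nle e f → f ∈ F

/-- An ultrafilter of the Boolean algebra of idempotents. -/
def IsIdemUltrafilter [InverseMonoidWithZero S] (F : Set S) : Prop :=
  IsIdemFilter F ∧ (0 : S) ∉ F ∧
    ∀ G : Set S, IsIdemFilter G → (0 : S) ∉ G → F ⊆ G → F = G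

end Filters

section PencilDefs

variable {S : Type u}

/-- `Preceq e f`: there is a pencil from `e` to `f`, i.e. finitely many
elements `x₁, …, xₘ` with `r(xᵢ) ≤ f` for all `i` and `e = ⋁ d(xᵢ)`
(a least upper bound for the natural partial order). -/
def Preceq [DistributiveInverseMonoid S] (e f : S) : Prop :=
  ∃ l : List S, l ≠ [] ∧ (∀ x ∈ l, nle (x * x⁻¹) f) ∧
    (∀ x ∈ l, nle (x⁻¹ * x) e) ∧ ∀ c : S, (∀ x ∈ l, nle (x⁻¹ * x) c) → nle e c

/-- Piecewise factorizable: every element is a finite join of elements each of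
which lies beneath a unit. -/
def PiecewiseFactorizable (S : Type u) [DistributiveInverseMonoid S] : Prop :=
  ∀ s : S, ∃ l : List S, l ≠ [] ∧ (∀ x ∈ l, ∃ g : S, IsUnit g ∧ nle x g) ∧
    (∀ x ∈ l, nle x s) ∧ ∀ c : S, (∀ x ∈ l, nle x c) → nle s c

/-- A properly infinite idempotent. -/
def ProperlyInfinite [DistributiveInverseMonoid S] (e : S) : Prop :=
  ∃ x y : S, x⁻¹ * x = e ∧ y⁻¹ * y = e ∧ Orth (x * x⁻¹) (y * y⁻¹) ∧
    nle (bsup (x * x⁻¹) (y * y⁻¹)) e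

end PencilDefs

/-- Purely infinite: every non-zero idempotent is properly infinite. -/
def PurelyInfinite (S : Type u) [DistributiveInverseMonoid S] : Prop :=
  ∀ e : S, e * e = e → e ≠ 0 → ProperlyInfinite e

/-!
For `e ∈ F`, atomlessness gives a nonzero idempotent `f < e`, and `e = f ∨ e f̄` splits `e` into
two orthogonal nonzero idempotents below it, one of which, `e₁`, lies in the ultrafilter `F` since
ultrafilters are prime; call the other `e₂`. As `S` is 0-simplifying, the ∨-ideal generated by `e₂`
is all of `S`, so `e₁` is a finite join of elements of `S e₂ S`, and primality puts one of them,
`x = u e₂ v`, into `F`. Then `t = e₂ u⁻¹ x` has `t⁻¹ t = x` and `e₂ t = t`; since `x e₂ = 0` the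
element `t` squares to zero, and it lies in `eSe` because `e₁, e₂ ≤ e`.
-/

namespace InverseMonoidWithZero

section Basic

variable {S : Type u} [InverseMonoidWithZero S] {a b e f p u v x : S}

theorem inv_inv (a : S) : a⁻¹⁻¹ = a :=
  (inv_unique a⁻¹ a (inv_mul_inv a) (mul_inv_mul a)).symm

theorem inv_eq_self_of_isIdempotentElem (he : IsIdempotentElem e) : e⁻¹ = e :=
  (inv_unique e e (by rw [he.eq, he.eq]) (by rw [he.eq, he.eq])).symm

theorem isIdempotentElem_inv_mul (a : S) : IsIdempotentElem (a⁻¹ * a) := by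
  rw [IsIdempotentElem, ← mul_assoc, inv_mul_inv]

theorem isIdempotentElem_mul_inv (a : S) : IsIdempotentElem (a * a⁻¹) := by
  rw [IsIdempotentElem, ← mul_assoc, mul_inv_mul]

/-- `f (ef)⁻¹ e` is another inverse of `ef`, hence equal to `(ef)⁻¹`; this makes `(ef)⁻¹`, and
with it `ef`, idempotent. -/
theorem isIdempotentElem_mul (he : IsIdempotentElem e) (hf : IsIdempotentElem f) :
    IsIdempotentElem (e * f) := by
  set x := (e * f)⁻¹
  have hxefx : x * (e * f) * x = x := inv_mul_inv (e * f)
  have hx : f * x * e = x := by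
    refine inv_unique (e * f) (f * x * e) ?_ ?_
    · calc e * f * (f * x * e) * (e * f) = e * f * x * (e * f) := by
            simp only [mul_assoc, he.mul_self_mul, hf.mul_self_mul]
        _ = e * f := mul_inv_mul _
    · calc f * x * e * (e * f) * (f * x * e) = f * (x * (e * f) * x) * e := by
            simp only [mul_assoc, he.mul_self_mul, hf.mul_self_mul]
        _ = f * x * e := by rw [hxefx]
  have hxx : IsIdempotentElem x := by
    calc x * x = f * (x * (e * f) * x) * e := by
          conv_lhs => rw [← hx]
          simp only [mul_assoc]
      _ = x := by rw [hxefx, hx]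
  have hefx : e * f = x⁻¹ := (inv_inv _).symm
  rw [hefx, inv_eq_self_of_isIdempotentElem hxx]
  exact hxx

theorem commute_of_isIdempotentElem (he : IsIdempotentElem e) (hf : IsIdempotentElem f) :
    Commute e f := by
  have hef := isIdempotentElem_mul he hf
  have hfe : f * e = (e * f)⁻¹ := by
    refine inv_unique _ _ ?_ ?_
    · calc e * f * (f * e) * (e * f) = (e * f) * (e * f) := by
            simp only [mul_assoc, he.mul_self_mul, hf.mul_self_mul]
        _ = e * f := hef.eq
    · calc f * e * (e * f) * (f * e) = (f * e) * (f * e) := by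
            simp only [mul_assoc, he.mul_self_mul, hf.mul_self_mul]
        _ = f * e := (isIdempotentElem_mul hf he).eq
  rw [Commute, SemiconjBy, hfe, inv_eq_self_of_isIdempotentElem hef]

theorem mul_inv_rev (a b : S) : (a * b)⁻¹ = b⁻¹ * a⁻¹ := by
  have hab := commute_of_isIdempotentElem (isIdempotentElem_mul_inv b) (isIdempotentElem_inv_mul a)
  refine (inv_unique _ _ ?_ ?_).symm
  · calc a * b * (b⁻¹ * a⁻¹) * (a * b) = a * ((b * b⁻¹) * (a⁻¹ * a)) * b := by
          simp only [mul_assoc]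
      _ = (a * a⁻¹ * a) * (b * b⁻¹ * b) := by rw [hab.eq]; simp only [mul_assoc]
      _ = a * b := by rw [mul_inv_mul, mul_inv_mul]
  · calc b⁻¹ * a⁻¹ * (a * b) * (b⁻¹ * a⁻¹) = b⁻¹ * ((a⁻¹ * a) * (b * b⁻¹)) * a⁻¹ := by
          simp only [mul_assoc]
      _ = (b⁻¹ * b * b⁻¹) * (a⁻¹ * a * a⁻¹) := by rw [← hab.eq]; simp only [mul_assoc]
      _ = b⁻¹ * a⁻¹ := by rw [inv_mul_inv, inv_mul_inv]

theorem mul_inv_mul_comm (hp : IsIdempotentElem p) (a : S) : a * p * (a⁻¹ * a) = a * p := by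
  rw [mul_assoc, (commute_of_isIdempotentElem hp (isIdempotentElem_inv_mul a)).eq,
    ← mul_assoc, ← mul_assoc, mul_inv_mul]

theorem isIdempotentElem_conj (hp : IsIdempotentElem p) (a : S) :
    IsIdempotentElem (a * p * a⁻¹) := by
  calc a * p * a⁻¹ * (a * p * a⁻¹) = a * p * (a⁻¹ * a) * p * a⁻¹ := by simp only [mul_assoc]
    _ = a * p * a⁻¹ := by rw [mul_inv_mul_comm hp, mul_assoc a p p, hp.eq]

theorem exists_mul_eq_and_inv_mul_eq (hp : IsIdempotentElem p) (hx : x = u * p * v) :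
    ∃ t : S, p * t = t ∧ t⁻¹ * t = x⁻¹ * x := by
  have hux : u * p * u⁻¹ * x = x := by
    calc u * p * u⁻¹ * x = u * p * (u⁻¹ * u) * p * v := by rw [hx]; simp only [mul_assoc]
      _ = x := by rw [mul_inv_mul_comm hp, mul_assoc u p p, hp.eq, hx]
  refine ⟨p * u⁻¹ * x, by rw [← mul_assoc, ← mul_assoc, hp.eq], ?_⟩
  calc (p * u⁻¹ * x)⁻¹ * (p * u⁻¹ * x) = x⁻¹ * (u * p * u⁻¹ * x) := by
        rw [mul_inv_rev, mul_inv_rev, inv_inv, inv_eq_self_of_isIdempotentElem hp]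
        simp only [mul_assoc, hp.mul_self_mul]
    _ = x⁻¹ * x := by rw [hux]

end Basic

section NaturalOrder

variable {S : Type u} [InverseMonoidWithZero S] {a b c d e p : S}

theorem nle_refl (a : S) : nle a a := ⟨1, mul_one 1, (one_mul a).symm⟩

theorem nle_trans (hab : nle a b) (hbc : nle b c) : nle a c := by
  obtain ⟨e, he, rfl⟩ := hab
  obtain ⟨f, hf, rfl⟩ := hbc
  exact ⟨e * f, isIdempotentElem_mul he hf, (mul_assoc e f c).symm⟩

theorem nle_antisymm (hab : nle a b) (hba : nle b a) : a = b := by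
  obtain ⟨e, he, rfl⟩ := hab
  obtain ⟨f, hf, hb⟩ := hba
  calc e * b = e * (f * (e * b)) := congrArg (e * ·) hb
    _ = f * (e * b) := by
      rw [← mul_assoc e f, (commute_of_isIdempotentElem he hf).eq, mul_assoc,
        IsIdempotentElem.mul_self_mul he]
    _ = b := hb.symm

theorem nle_mul (hab : nle a b) (hcd : nle c d) : nle (a * c) (b * d) := by
  obtain ⟨e, he, rfl⟩ := hab
  obtain ⟨f, hf, rfl⟩ := hcd
  refine ⟨e * (b * f * b⁻¹), isIdempotentElem_mul he (isIdempotentElem_conj hf b), ?_⟩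
  calc e * b * (f * d) = e * (b * f * (b⁻¹ * b)) * d := by
        rw [mul_inv_mul_comm hf]; simp only [mul_assoc]
    _ = e * (b * f * b⁻¹) * (b * d) := by simp only [mul_assoc]

theorem zero_nle (a : S) : nle 0 a := ⟨0, mul_zero' 0, (zero_mul' a).symm⟩

theorem eq_zero_of_nle_zero (h : nle a 0) : a = 0 := by
  obtain ⟨e, -, rfl⟩ := h
  exact mul_zero' e

theorem nle_one (hp : IsIdempotentElem p) : nle p 1 := ⟨p, hp, (mul_one p).symm⟩

theorem mul_eq_of_nle (he : IsIdempotentElem e) (h : nle a e) : a * e = a := by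
  obtain ⟨k, -, rfl⟩ := h
  exact he.mul_mul_self k

theorem isIdempotentElem_of_nle (he : IsIdempotentElem e) (h : nle a e) : IsIdempotentElem a := by
  obtain ⟨k, hk, rfl⟩ := h
  calc k * e * (k * e) = k * (e * k) * e := by simp only [mul_assoc]
    _ = k * e := by
      rw [(commute_of_isIdempotentElem he hk).eq, ← mul_assoc, hk, mul_assoc, he.eq]

theorem compat_of_nle (hac : nle a c) (hbc : nle b c) : Compat a b := by
  obtain ⟨e, he, rfl⟩ := hac
  obtain ⟨f, hf, rfl⟩ := hbc
  constructor
  · have : e * c * (f * c)⁻¹ = e * (c * c⁻¹) * f := by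
      rw [mul_inv_rev, inv_eq_self_of_isIdempotentElem hf]; simp only [mul_assoc]
    rw [this]
    exact isIdempotentElem_mul (isIdempotentElem_mul he (isIdempotentElem_mul_inv c)) hf
  · have : (e * c)⁻¹ * (f * c) = c⁻¹ * (e * f) * c⁻¹⁻¹ := by
      rw [mul_inv_rev, inv_eq_self_of_isIdempotentElem he, inv_inv]; simp only [mul_assoc]
    rw [this]
    exact isIdempotentElem_conj (isIdempotentElem_mul he hf) c⁻¹

def IsJoin (l : List S) (a : S) : Prop :=
  (∀ x ∈ l, nle x a) ∧ ∀ c, (∀ x ∈ l, nle x c) → nle a c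

theorem IsJoin.unique {l : List S} (ha : IsJoin l a) (hb : IsJoin l b) : a = b :=
  nle_antisymm (ha.2 b hb.1) (hb.2 a ha.1)

theorem isJoin_nil : IsJoin ([] : List S) 0 := ⟨by simp, fun c _ => zero_nle c⟩

theorem isJoin_singleton (a : S) : IsJoin [a] a :=
  ⟨by simpa using nle_refl a, fun _ h => h a List.mem_cons_self⟩

end NaturalOrder

section Distributive

variable {S : Type u} [DistributiveInverseMonoid S] {a b c : S}

theorem le_bsup_left (h : Compat a b) : nle a (bsup a b) :=
  DistributiveInverseMonoid.le_sup_left a b h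

theorem le_bsup_right (h : Compat a b) : nle b (bsup a b) :=
  DistributiveInverseMonoid.le_sup_right a b h

theorem bsup_le (h : Compat a b) (hac : nle a c) (hbc : nle b c) : nle (bsup a b) c :=
  DistributiveInverseMonoid.sup_le a b c h hac hbc

theorem mul_bsup (h : Compat a b) (c : S) : c * bsup a b = bsup (c * a) (c * b) :=
  DistributiveInverseMonoid.mul_sup a b c h

theorem bsup_mul (h : Compat a b) (c : S) : bsup a b * c = bsup (a * c) (b * c) :=
  DistributiveInverseMonoid.sup_mul a b c h

theorem bsup_zero (a : S) : bsup a 0 = a :=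
  have h : Compat a 0 := compat_of_nle (nle_refl a) (zero_nle a)
  nle_antisymm (bsup_le h (nle_refl a) (zero_nle a)) (le_bsup_left h)

theorem IsJoin.append {l₁ l₂ : List S} (ha : IsJoin l₁ a) (hb : IsJoin l₂ b) (hab : Compat a b) :
    IsJoin (l₁ ++ l₂) (bsup a b) := by
  refine ⟨fun x hx => ?_, fun c hc => bsup_le hab (ha.2 c ?_) (hb.2 c ?_)⟩
  · rcases List.mem_append.mp hx with hx | hx
    exacts [nle_trans (ha.1 x hx) (le_bsup_left hab), nle_trans (hb.1 x hx) (le_bsup_right hab)]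
  exacts [fun x hx => hc x (List.mem_append_left _ hx),
    fun x hx => hc x (List.mem_append_right _ hx)]

theorem exists_isJoin {l : List S} (hl : ∀ x ∈ l, nle x c) : ∃ a, IsJoin l a := by
  induction l with
  | nil => exact ⟨0, isJoin_nil⟩
  | cons x t ih =>
    have ht : ∀ y ∈ t, nle y c := fun y hy => hl y (List.mem_cons_of_mem x hy)
    obtain ⟨b, hb⟩ := ih ht
    have hxb : Compat x b := compat_of_nle (hl x List.mem_cons_self) (hb.2 c ht)
    exact ⟨bsup x b, (isJoin_singleton x).append hb hxb⟩

theorem IsJoin.exists_of_cons {x : S} {t : List S} (h : IsJoin (x :: t) a) :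
    ∃ b, IsJoin t b ∧ Compat x b ∧ a = bsup x b := by
  have ht : ∀ y ∈ t, nle y a := fun y hy => h.1 y (List.mem_cons_of_mem x hy)
  obtain ⟨b, hb⟩ := exists_isJoin ht
  have hxb : Compat x b := compat_of_nle (h.1 x List.mem_cons_self) (hb.2 a ht)
  exact ⟨b, hb, hxb, h.unique ((isJoin_singleton x).append hb hxb)⟩

theorem IsJoin.map {φ : S → S} (hmono : ∀ {a b}, nle a b → nle (φ a) (φ b)) (hzero : φ 0 = 0)
    (hsup : ∀ {a b}, Compat a b → φ (bsup a b) = bsup (φ a) (φ b)) {l : List S}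
    (h : IsJoin l a) : IsJoin (l.map φ) (φ a) := by
  induction l generalizing a with
  | nil => rw [h.unique isJoin_nil, hzero]; exact isJoin_nil
  | cons x t ih =>
    obtain ⟨b, hb, hxb, rfl⟩ := h.exists_of_cons
    rw [hsup hxb]
    exact (isJoin_singleton (φ x)).append (ih hb)
      (compat_of_nle (hmono (le_bsup_left hxb)) (hmono (le_bsup_right hxb)))

theorem IsJoin.mul_left {l : List S} (h : IsJoin l a) (s : S) :
    IsJoin (l.map (s * ·)) (s * a) :=
  h.map (nle_mul (nle_refl s)) (mul_zero' s) (mul_bsup · s)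

theorem IsJoin.mul_right {l : List S} (h : IsJoin l a) (s : S) :
    IsJoin (l.map (· * s)) (a * s) :=
  h.map (nle_mul · (nle_refl s)) (zero_mul' s) (bsup_mul · s)

end Distributive

section Ultrafilter

variable {S : Type u} [DistributiveInverseMonoid S] {F : Set S} {a p q : S}

/-- If `p ∉ F`, the filter generated by `F` and `q` is proper, so by maximality it is `F`. -/
theorem _root_.IsIdemUltrafilter.mem_or_mem (hF : IsIdemUltrafilter F) (hp : IsIdempotentElem p)
    (hq : IsIdempotentElem q) (h : bsup p q ∈ F) : p ∈ F ∨ q ∈ F := by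
  obtain ⟨⟨⟨g₀, hg₀⟩, hidem, hmul, hup⟩, -, hmax⟩ := hF
  refine or_iff_not_imp_left.mpr fun hpF => ?_
  set G := {h : S | h * h = h ∧ ∃ g ∈ F, nle (g * q) h}
  have hqG : q ∈ G := ⟨hq, g₀, hg₀, ⟨g₀, hidem g₀ hg₀, rfl⟩⟩
  have hFG : F ⊆ G := fun g hg =>
    ⟨hidem g hg, g, hg, ⟨q, hq, (commute_of_isIdempotentElem (hidem g hg) hq).eq⟩⟩
  have hG : IsIdemFilter G := by
    refine ⟨⟨q, hqG⟩, fun h hh => hh.1, ?_, ?_⟩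
    · rintro h₁ ⟨hh₁, g₁, hg₁, hle₁⟩ h₂ ⟨hh₂, g₂, hg₂, hle₂⟩
      refine ⟨isIdempotentElem_mul hh₁ hh₂, g₁ * g₂, hmul g₁ hg₁ g₂ hg₂, ?_⟩
      have : g₁ * g₂ * q = g₁ * q * (g₂ * q) := by
        rw [mul_assoc g₁, mul_assoc g₁, ← mul_assoc q,
          (commute_of_isIdempotentElem hq (hidem g₂ hg₂)).eq, mul_assoc, hq.eq]
      rw [this]
      exact nle_mul hle₁ hle₂
    · rintro h ⟨-, g, hg, hle⟩ k hk hhk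
      exact ⟨hk, g, hg, nle_trans hle hhk⟩
  have h0G : (0 : S) ∉ G := by
    rintro ⟨-, g, hg, hle⟩
    have hgq : g * q = 0 := eq_zero_of_nle_zero hle
    have hgp : g * p ∈ F := by
      have := hmul g hg _ h
      rwa [mul_bsup (compat_of_nle (nle_one hp) (nle_one hq)), hgq, bsup_zero] at this
    exact hpF (hup _ hgp p hp ⟨g, hidem g hg, rfl⟩)
  exact hmax G hG h0G hFG ▸ hqG

theorem _root_.IsIdemUltrafilter.exists_mem_of_isJoin (hF : IsIdemUltrafilter F) {l : List S}
    (hl : IsJoin l a) (ha : a ∈ F) : ∃ x ∈ l, x ∈ F := by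
  induction l generalizing a with
  | nil => exact absurd (hl.unique isJoin_nil ▸ ha) hF.2.1
  | cons x t ih =>
    obtain ⟨b, hb, hxb, rfl⟩ := hl.exists_of_cons
    have hidem := hF.1.2.1 _ ha
    rcases hF.mem_or_mem (isIdempotentElem_of_nle hidem (le_bsup_left hxb))
        (isIdempotentElem_of_nle hidem (le_bsup_right hxb)) ha with hx | hb'
    · exact ⟨x, List.mem_cons_self, hx⟩
    · obtain ⟨y, hy, hyF⟩ := ih hb hb'
      exact ⟨y, List.mem_cons_of_mem x hy, hyF⟩

end Ultrafilter

section VIdeal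

variable {S : Type u} [DistributiveInverseMonoid S] {p : S}

def vIdealSpan (p : S) : Set S :=
  {a | ∃ l : List S, (∀ x ∈ l, ∃ u v, x = u * p * v) ∧ IsJoin l a}

theorem isVIdeal_vIdealSpan (p : S) : IsVIdeal (vIdealSpan p) := by
  refine ⟨⟨⟨0, [], by simp, isJoin_nil⟩, fun a ⟨l, hl, ha⟩ s => ⟨?_, ?_⟩⟩, ?_⟩
  · refine ⟨l.map (s * ·), ?_, ha.mul_left s⟩
    simp only [List.mem_map]
    rintro _ ⟨x, hx, rfl⟩
    obtain ⟨u, v, rfl⟩ := hl x hx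
    exact ⟨s * u, v, by simp only [mul_assoc]⟩
  · refine ⟨l.map (· * s), ?_, ha.mul_right s⟩
    simp only [List.mem_map]
    rintro _ ⟨x, hx, rfl⟩
    obtain ⟨u, v, rfl⟩ := hl x hx
    exact ⟨u, v * s, by simp only [mul_assoc]⟩
  · rintro a ⟨l₁, hl₁, ha⟩ b ⟨l₂, hl₂, hb⟩ hab
    refine ⟨l₁ ++ l₂, fun x hx => ?_, ha.append hb hab⟩
    rcases List.mem_append.mp hx with hx | hx
    exacts [hl₁ x hx, hl₂ x hx]

theorem vIdealSpan_eq_univ (h0 : ZeroSimplifying S) (hp : p ≠ 0) : vIdealSpan p = Set.univ := by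
  have hpI : p ∈ vIdealSpan p :=
    ⟨[p], fun x hx => ⟨1, 1, by rw [List.mem_singleton.mp hx, one_mul, mul_one]⟩,
      isJoin_singleton p⟩
  refine (h0 _ (isVIdeal_vIdealSpan p)).resolve_left fun h => hp ?_
  rw [h] at hpI
  exact hpI

end VIdeal

theorem exists_infinitesimal_of_mul_eq_zero {S : Type u} [DistributiveInverseMonoid S]
    (h0 : ZeroSimplifying S) {F : Set S} (hF : IsIdemUltrafilter F) {e e₁ e₂ : S}
    (he : IsIdempotentElem e) (he₁ : e₁ ∈ F) (he₂ : IsIdempotentElem e₂) (he₂0 : e₂ ≠ 0)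
    (h₁₂ : e₁ * e₂ = 0) (h₁ : nle e₁ e) (h₂ : nle e₂ e) :
    ∃ a : S, Infinitesimal a ∧ a⁻¹ * a ∈ F ∧ ∃ s : S, a = e * s * e := by
  obtain ⟨l, hl, hjoin⟩ : e₁ ∈ vIdealSpan e₂ := by
    rw [vIdealSpan_eq_univ h0 he₂0]
    trivial
  obtain ⟨x, hxl, hxF⟩ := hF.exists_mem_of_isJoin hjoin he₁
  obtain ⟨u, v, hx⟩ := hl x hxl
  have hx₁ : nle x e₁ := hjoin.1 x hxl
  have hxi : IsIdempotentElem x := isIdempotentElem_of_nle (hF.1.2.1 e₁ he₁) hx₁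
  obtain ⟨t, ht, htx⟩ := exists_mul_eq_and_inv_mul_eq he₂ hx
  rw [inv_eq_self_of_isIdempotentElem hxi, hxi.eq] at htx
  have htx' : t * x = t := by rw [← htx, ← mul_assoc, mul_inv_mul]
  have hxe₂ : x * e₂ = 0 := by
    rw [← mul_eq_of_nle (hF.1.2.1 e₁ he₁) hx₁, mul_assoc, h₁₂, mul_zero']
  have hee₂ : e * e₂ = e₂ := (commute_of_isIdempotentElem he he₂).eq.trans (mul_eq_of_nle he h₂)
  have hxe : x * e = x := mul_eq_of_nle he (nle_trans hx₁ h₁)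
  refine ⟨t, ⟨?_, ?_⟩, htx ▸ hxF, t, ?_⟩
  · rintro rfl
    rw [mul_zero'] at htx
    exact hF.2.1 (htx ▸ hxF)
  · calc t * t = t * x * (e₂ * t) := by rw [htx', ht]
      _ = t * (x * e₂) * t := by simp only [mul_assoc]
      _ = 0 := by rw [hxe₂, mul_zero', zero_mul']
  · calc t = e * e₂ * t * (x * e) := by rw [hee₂, hxe, mul_assoc, htx', ht]
      _ = e * (e₂ * t * x) * e := by simp only [mul_assoc]
      _ = e * t * e := by rw [mul_assoc e₂, htx', ht]

section Boolean

variable {S : Type u} [BooleanInverseMonoid S] {F : Set S} {e p : S}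

theorem isIdempotentElem_bcompl (hp : IsIdempotentElem p) : IsIdempotentElem (bcompl p) :=
  BooleanInverseMonoid.compl_idem p hp

theorem eq_bsup_mul_compl (hp : IsIdempotentElem p) (a : S) :
    a = bsup (a * p) (a * bcompl p) := by
  rw [← mul_bsup (compat_of_nle (nle_one hp) (nle_one (isIdempotentElem_bcompl hp))),
    show bsup p (bcompl p) = 1 from BooleanInverseMonoid.sup_compl p hp, mul_one]

theorem exists_mem_mul_eq_zero (hat : IdemAtomless S) (hF : IsIdemUltrafilter F) (he : e ∈ F) :
    ∃ e₁ e₂ : S, e₁ ∈ F ∧ IsIdempotentElem e₂ ∧ e₂ ≠ 0 ∧ e₁ * e₂ = 0 ∧ nle e₁ e ∧ nle e₂ e := by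
  have hei : IsIdempotentElem e := hF.1.2.1 e he
  obtain ⟨f, hf, hf0, hfe, hfne⟩ := hat e hei fun h => hF.2.1 (h ▸ he)
  have hfc := isIdempotentElem_bcompl hf
  set f' := e * bcompl f
  have hf'i : IsIdempotentElem f' := isIdempotentElem_mul hei hfc
  have hesplit : e = bsup f f' := by
    conv_lhs => rw [eq_bsup_mul_compl hf e]
    rw [← (commute_of_isIdempotentElem hf hei).eq, mul_eq_of_nle hei hfe]
  have hff' : f * f' = 0 := by
    rw [← mul_assoc, mul_eq_of_nle hei hfe]
    exact BooleanInverseMonoid.mul_compl f hf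
  have hf'0 : f' ≠ 0 := fun h => hfne (by rw [hesplit, h, bsup_zero])
  have hf'e : nle f' e := ⟨bcompl f, hfc, (commute_of_isIdempotentElem hei hfc).eq⟩
  rcases hF.mem_or_mem hf hf'i (hesplit ▸ he) with hfF | hf'F
  · exact ⟨f, f', hfF, hf'i, hf'0, hff', hfe, hf'e⟩
  · exact ⟨f', f, hf'F, hf, hf0, (commute_of_isIdempotentElem hf'i hf).eq.trans hff',
      hf'e, hfe⟩

end Boolean

end InverseMonoidWithZero

theorem statement7_general (S : Type u) [BooleanInverseMeetMonoid S]
    (hat : IdemAtomless S) (h0 : ZeroSimplifying S)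
    (F : Set S) (hF : IsIdemUltrafilter F) (e : S) (he : e ∈ F) :
    ∃ a : S, Infinitesimal a ∧ a⁻¹ * a ∈ F ∧ ∃ s : S, a = e * s * e := by
  obtain ⟨e₁, e₂, he₁, he₂, he₂0, h₁₂, h₁, h₂⟩ :=
    InverseMonoidWithZero.exists_mem_mul_eq_zero hat hF he
  exact InverseMonoidWithZero.exists_infinitesimal_of_mul_eq_zero h0 hF (hF.1.2.1 e he)
    he₁ he₂ he₂0 h₁₂ h₁ h₂

/-- In a 0-simplifying Tarski monoid, for every ultrafilter
`F` of the Boolean algebra of idempotents and every `e ∈ F` there is an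
infinitesimal `a` with `a⁻¹a ∈ F` and `a ∈ eSe`. -/
theorem statement7 (S : Type u) [BooleanInverseMeetMonoid S] [Countable S]
    (hat : IdemAtomless S) (h0 : ZeroSimplifying S)
    (F : Set S) (hF : IsIdemUltrafilter F) (e : S) (he : e ∈ F) :
    ∃ a : S, Infinitesimal a ∧ a⁻¹ * a ∈ F ∧ ∃ s : S, a = e * s * e :=
  statement7_general S hat h0 F hF e he
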